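/- Let P(z) = ∑_{j=0}^m a_j z^{m-j} be a polynomial with complex coefficients, p a prime, and s a positive integer with (p-1)s ≤ m. Then Φ_p(z^s) divides P(z) if and only if for every h ∈ {0, 1, ..., ps-1}, ∑_{j ≡ h (mod ps)} a_j = ∑_{j ≡ h-s (mod ps)} a_j. -/

import Mathlib

open Polynomial Finset

/-!
Since `Φ_p(z^s) (z^s - 1) = z^{ps} - 1`, the polynomial `Φ_p(z^s)` divides `P` iff `z^{ps} - 1`
divides `(z^s - 1) P`. Reducing modulo `z^n - 1` folds exponents modulo `n`, so `z^n - 1` divides a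
polynomial iff, for every residue `e` mod `n`, its coefficients at exponents `≡ e` sum to zero.
For `(z^s - 1) P` these sums are differences of two residue-class sums of the `a_j` whose classes
differ by `s`.
-/

namespace Polynomial

section CoeffSumMod

variable {R : Type*} {n : ℕ}

section Semiring

variable [Semiring R]

variable (n) in
def coeffSumMod (e : ZMod n) : R[X] →ₗ[R] R :=
  lsum fun k => if (k : ZMod n) = e then LinearMap.id else 0

theorem coeffSumMod_monomial (e : ZMod n) (k : ℕ) (a : R) :
    coeffSumMod n e (monomial k a) = if (k : ZMod n) = e then a else 0 := by
  rw [coeffSumMod, lsum_apply, sum_monomial_index _ _ (by simp)]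
  split_ifs <;> rfl

theorem coeffSumMod_X_pow_mul (e : ZMod n) (s : ℕ) (Q : R[X]) :
    coeffSumMod n e (X ^ s * Q) = coeffSumMod n (e - s) Q := by
  induction Q using Polynomial.induction_on' with
  | add P Q hP hQ => rw [mul_add, map_add, map_add, hP, hQ]
  | monomial k a =>
    simp only [X_pow_mul_monomial, coeffSumMod_monomial, Nat.cast_add, eq_sub_iff_add_eq]

end Semiring

variable [CommRing R] [NeZero n]

variable (n) in
/-- The remainder of `Q` modulo `X ^ n - 1`. -/
noncomputable def foldMod (Q : R[X]) : R[X] :=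
  ∑ e : ZMod n, monomial e.val (coeffSumMod n e Q)

theorem X_pow_sub_one_dvd_sub_foldMod (Q : R[X]) : (X ^ n - 1 : R[X]) ∣ Q - foldMod n Q := by
  induction Q using Polynomial.induction_on' with
  | add P Q hP hQ =>
    convert dvd_add hP hQ using 1
    simp only [foldMod, map_add, sum_add_distrib]
    abel
  | monomial k a =>
    have hfold : foldMod n (monomial k a) = monomial (k % n) a := by
      simp only [foldMod, coeffSumMod_monomial, apply_ite, map_zero, sum_ite_eq, mem_univ,
        if_true, ZMod.val_natCast]
    rw [hfold, ← C_mul_X_pow_eq_monomial, ← C_mul_X_pow_eq_monomial, ← mul_sub]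
    refine dvd_mul_of_dvd_right ?_ _
    have hsplit : (X : R[X]) ^ k - X ^ (k % n) = X ^ (k % n) * (X ^ (n * (k / n)) - 1) := by
      rw [mul_sub, mul_one, ← pow_add, Nat.mod_add_div]
    rw [hsplit]
    exact dvd_mul_of_dvd_right (pow_one_sub_dvd_pow_mul_sub_one X n (k / n)) _

theorem degree_foldMod_lt (Q : R[X]) : (foldMod n Q).degree < n := by
  refine (degree_sum_le _ _).trans_lt ((Finset.sup_lt_iff (WithBot.bot_lt_coe n)).2 ?_)
  exact fun e _ => (degree_monomial_le _ _).trans_lt (WithBot.coe_lt_coe.2 e.val_lt)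

theorem coeff_foldMod_val (Q : R[X]) (e : ZMod n) :
    (foldMod n Q).coeff e.val = coeffSumMod n e Q := by
  simp only [foldMod, finsetSum_coeff, coeff_monomial, ZMod.val_injective n |>.eq_iff,
    sum_ite_eq', mem_univ, if_true]

theorem X_pow_sub_one_dvd_iff [Nontrivial R] (Q : R[X]) :
    (X ^ n - 1 : R[X]) ∣ Q ↔ ∀ e : ZMod n, coeffSumMod n e Q = 0 := by
  have hmonic : (X ^ n - 1 : R[X]).Monic := by
    simpa using monic_X_pow_sub_C (1 : R) (NeZero.ne n)
  have hdeg : (X ^ n - 1 : R[X]).degree = n := by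
    simpa using degree_X_pow_sub_C (NeZero.pos n) (1 : R)
  have hmod : Q %ₘ (X ^ n - 1) = foldMod n Q := by
    rw [modByMonic_eq_of_dvd_sub hmonic (X_pow_sub_one_dvd_sub_foldMod Q),
      (modByMonic_eq_self_iff hmonic).2 (hdeg ▸ degree_foldMod_lt Q)]
  rw [← modByMonic_eq_zero_iff_dvd hmonic, hmod]
  refine ⟨fun h e => by rw [← coeff_foldMod_val, h, coeff_zero], fun h => ?_⟩
  simp only [foldMod, h, map_zero, sum_const_zero]

theorem X_pow_sub_one_dvd_X_pow_sub_one_mul_iff [Nontrivial R] (s : ℕ) (Q : R[X]) :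
    (X ^ n - 1 : R[X]) ∣ (X ^ s - 1) * Q ↔
      ∀ e : ZMod n, coeffSumMod n (e - s) Q = coeffSumMod n e Q := by
  simp only [X_pow_sub_one_dvd_iff, sub_mul, one_mul, map_sub, coeffSumMod_X_pow_mul, sub_eq_zero]

end CoeffSumMod

theorem coeffSumMod_sum_C_mul_X_pow_sub {R : Type*} [Semiring R] (n m : ℕ) (a : ℕ → R)
    (e : ZMod n) :
    coeffSumMod n e (∑ j ∈ range (m + 1), C (a j) * X ^ (m - j)) =
      ∑ j ∈ (range (m + 1)).filter (fun j : ℕ => (j : ZMod n) = m - e), a j := by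
  simp only [map_sum, C_mul_X_pow_eq_monomial, coeffSumMod_monomial, sum_filter]
  refine sum_congr rfl fun j hj => ?_
  rw [Nat.cast_sub (Nat.le_of_lt_succ (mem_range.1 hj))]
  exact if_congr (by rw [sub_eq_iff_eq_add', eq_sub_iff_add_eq, eq_comm]) rfl rfl

theorem cyclotomic_prime_comp_X_pow_mul {R : Type*} [CommRing R] (p s : ℕ) [Fact p.Prime] :
    (cyclotomic p R).comp (X ^ s) * (X ^ s - 1) = X ^ (p * s) - 1 := by
  simpa [mul_comp, pow_mul'] using congrArg (·.comp (X ^ s)) (cyclotomic_prime_mul_X_sub_one R p)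

theorem cyclotomic_prime_comp_X_pow_dvd_iff {R : Type*} [CommRing R] [IsDomain R] {p s : ℕ}
    [Fact p.Prime] (hs : 0 < s) (Q : R[X]) :
    (cyclotomic p R).comp (X ^ s) ∣ Q ↔ (X ^ (p * s) - 1 : R[X]) ∣ (X ^ s - 1) * Q := by
  rw [← cyclotomic_prime_comp_X_pow_mul, mul_comm _ Q,
    mul_dvd_mul_iff_right (by simpa using X_pow_sub_C_ne_zero hs (1 : R))]

end Polynomial

theorem divisibility_by_phi_p_zs (m s : ℕ) (p : ℕ) (hp : p.Prime) (a : ℕ → ℂ)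
    (hs : 1 ≤ s) :
    ((Polynomial.cyclotomic p ℂ).comp (X ^ s) ∣
        ∑ j ∈ Finset.range (m + 1), C (a j) * X ^ (m - j)) ↔
      ∀ h < p * s,
        ∑ j ∈ (Finset.range (m + 1)).filter (fun (j : ℕ) => (j : ℤ) ≡ (h : ℤ) [ZMOD (p * s)]),
            a j =
          ∑ j ∈ (Finset.range (m + 1)).filter
              (fun (j : ℕ) => (j : ℤ) ≡ (h : ℤ) - (s : ℤ) [ZMOD (p * s)]), a j := by
  have := Fact.mk hp
  have := NeZero.mk (Nat.mul_pos hp.pos hs).ne'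
  set A : ZMod (p * s) → ℂ := fun t =>
    ∑ j ∈ (range (m + 1)).filter (fun j : ℕ => (j : ZMod (p * s)) = t), a j
  have hA (t : ℤ) :
      ∑ j ∈ (range (m + 1)).filter (fun j : ℕ => (j : ℤ) ≡ t [ZMOD (p * s)]), a j = A t := by
    simp only [A, ← Nat.cast_mul, ← ZMod.intCast_eq_intCast_iff, Int.cast_natCast]
  have hshift : (∀ e : ZMod (p * s), A (m - (e - s)) = A (m - e)) ↔ ∀ t, A t = A (t - s) :=
    ⟨fun H t => by convert H (m + s - t) using 2 <;> ring,
      fun H e => by convert H (m - (e - s)) using 2; ring⟩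
  rw [cyclotomic_prime_comp_X_pow_dvd_iff hs, X_pow_sub_one_dvd_X_pow_sub_one_mul_iff]
  simp only [coeffSumMod_sum_C_mul_X_pow_sub, hA]
  push_cast
  rw [hshift]
  exact ⟨fun H h _ => H h, fun H t => by simpa using H t.val t.val_lt⟩
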